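/- For each fixed c with 0 < c ≤ 1, the supremum over a ∈ (0, c/2] of λ₃(a) = a[ψ(c-a) - ψ(a)] equals 1, where ψ is the digamma function; the supremum is attained in the limit a → 0⁺ and λ₃(a) ≤ 1 for all a ∈ (0, c/2]. -/

import Mathlib

open Real Filter Set

/-- The digamma function ψ(x) = Γ'(x)/Γ(x), as the derivative of log ∘ Γ. -/
noncomputable def digamma (x : ℝ) : ℝ := deriv (fun y => Real.log (Real.Gamma y)) x

lemma logGamma_diffAt {x : ℝ} (hx : 0 < x) :
    DifferentiableAt ℝ (fun y => Real.log (Real.Gamma y)) x := by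
  refine DifferentiableAt.log ?_ (Real.Gamma_pos_of_pos hx).ne'
  refine Real.differentiableAt_Gamma fun m => ?_
  have : (0:ℝ) ≤ m := Nat.cast_nonneg m
  nlinarith

lemma logGamma_hasDerivAt {x : ℝ} (hx : 0 < x) :
    HasDerivAt (fun y => Real.log (Real.Gamma y)) (digamma x) x :=
  (logGamma_diffAt hx).hasDerivAt

lemma digamma_mono : MonotoneOn digamma (Set.Ioi 0) := by
  have h := Real.convexOn_log_Gamma.monotoneOn_deriv
    (fun x hx => logGamma_diffAt (Set.mem_Ioi.mp hx))
  convert h using 1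
  rfl

/-- recurrence: ψ(x+1) = ψ(x) + 1/x -/
lemma digamma_add_one {x : ℝ} (hx : 0 < x) : digamma (x + 1) = digamma x + 1 / x := by
  have h1 : HasDerivAt (fun y : ℝ => Real.log (Real.Gamma (y + 1))) (digamma (x + 1)) x := by
    simpa [Function.comp_def] using (logGamma_hasDerivAt (by linarith : (0:ℝ) < x + 1)).comp x
      ((hasDerivAt_id x).add_const 1)
  have h2 : HasDerivAt (fun y : ℝ => Real.log y + Real.log (Real.Gamma y))
      (1 / x + digamma x) x := by
    simpa [one_div, Pi.add_def] using (Real.hasDerivAt_log hx.ne').add (logGamma_hasDerivAt hx)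
  have heq : (fun y : ℝ => Real.log (Real.Gamma (y + 1))) =ᶠ[nhds x]
      (fun y : ℝ => Real.log y + Real.log (Real.Gamma y)) := by
    filter_upwards [eventually_gt_nhds hx] with y hy
    rw [Real.Gamma_add_one hy.ne', Real.log_mul hy.ne' (Real.Gamma_pos_of_pos hy).ne']
  have := (h1.congr_of_eventuallyEq heq.symm).unique h2
  linarith

/-- reflection: ψ(1-x) - ψ(x) = π cos(πx)/sin(πx) for x ∈ (0,1) -/
lemma digamma_reflect {x : ℝ} (hx0 : 0 < x) (hx1 : x < 1) :
    digamma (1 - x) - digamma x = Real.pi * Real.cos (Real.pi * x) / Real.sin (Real.pi * x) := by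
  have hs : 0 < Real.sin (Real.pi * x) := Real.sin_pos_of_pos_of_lt_pi (by positivity)
    (by nlinarith [Real.pi_pos])
  have hinner : HasDerivAt (fun y : ℝ => 1 - y) (-1) x := by
    simpa using (hasDerivAt_id x).const_sub (1:ℝ)
  have h1 : HasDerivAt (fun y : ℝ => Real.log (Real.Gamma y) + Real.log (Real.Gamma (1 - y)))
      (digamma x + digamma (1 - x) * (-1)) x :=
    (logGamma_hasDerivAt hx0).add
      ((logGamma_hasDerivAt (by linarith : (0:ℝ) < 1 - x)).comp x hinner)
  have hinner2 : HasDerivAt (fun y : ℝ => Real.pi * y) Real.pi x := by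
    simpa using (hasDerivAt_id x).const_mul Real.pi
  have hsin : HasDerivAt (fun y : ℝ => Real.sin (Real.pi * y))
      (Real.cos (Real.pi * x) * Real.pi) x :=
    (Real.hasDerivAt_sin (Real.pi * x)).comp x hinner2
  have h2 : HasDerivAt (fun y : ℝ => Real.log Real.pi - Real.log (Real.sin (Real.pi * y)))
      (0 - Real.cos (Real.pi * x) * Real.pi / Real.sin (Real.pi * x)) x :=
    (hasDerivAt_const x _).sub (hsin.log hs.ne')
  have heq : (fun y : ℝ => Real.log (Real.Gamma y) + Real.log (Real.Gamma (1 - y))) =ᶠ[nhds x]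
      (fun y : ℝ => Real.log Real.pi - Real.log (Real.sin (Real.pi * y))) := by
    have hmem : Set.Ioo (0:ℝ) 1 ∈ nhds x := Ioo_mem_nhds hx0 hx1
    filter_upwards [hmem] with y hy
    have hy0 := hy.1; have hy1 := hy.2
    have hsy : 0 < Real.sin (Real.pi * y) := Real.sin_pos_of_pos_of_lt_pi (by positivity)
      (by nlinarith [Real.pi_pos])
    rw [← Real.log_mul (Real.Gamma_pos_of_pos hy0).ne'
      (Real.Gamma_pos_of_pos (by linarith : (0:ℝ) < 1 - y)).ne',
      Real.Gamma_mul_Gamma_one_sub, ← Real.log_div Real.pi_pos.ne' hsy.ne',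
      Real.log_div Real.pi_pos.ne' hsy.ne']
  have := (h1.congr_of_eventuallyEq heq.symm).unique h2
  field_simp at this ⊢
  nlinarith [this]

theorem stmt_5 (c : ℝ) (hc0 : 0 < c) (hc1 : c ≤ 1) :
    (∀ a ∈ Set.Ioc (0 : ℝ) (c / 2), a * (digamma (c - a) - digamma a) ≤ 1) ∧
    Filter.Tendsto (fun a : ℝ => a * (digamma (c - a) - digamma a))
      (nhdsWithin 0 (Set.Ioi 0)) (nhds 1) ∧
    IsLUB ((fun a : ℝ => a * (digamma (c - a) - digamma a)) '' Set.Ioc 0 (c / 2)) 1 := by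
  have hub : ∀ a ∈ Set.Ioc (0 : ℝ) (c / 2), a * (digamma (c - a) - digamma a) ≤ 1 := by
    rintro a ⟨ha0, ha2⟩
    have hac : c - a ≤ 1 - a := by linarith
    have hca : (0:ℝ) < c - a := by linarith
    have ha1 : a ≤ 1 - a := by linarith
    have hmono : digamma (c - a) ≤ digamma (1 - a) :=
      digamma_mono (Set.mem_Ioi.mpr hca) (Set.mem_Ioi.mpr (by linarith)) hac
    have key : a * (digamma (1 - a) - digamma a) ≤ 1 := by
      rcases lt_or_eq_of_le (show a ≤ 1/2 by linarith) with h | h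
      · rw [digamma_reflect ha0 (by linarith)]
        have hπa : Real.pi * a < Real.pi / 2 := by nlinarith [Real.pi_pos]
        have hs : 0 < Real.sin (Real.pi * a) := Real.sin_pos_of_pos_of_lt_pi (by positivity)
          (by nlinarith [Real.pi_gt_three])
        have ht := Real.lt_tan (by positivity : (0:ℝ) < Real.pi * a) hπa
        have hcos : 0 < Real.cos (Real.pi * a) :=
          Real.cos_pos_of_mem_Ioo ⟨by nlinarith [Real.pi_pos], hπa⟩
        rw [Real.tan_eq_sin_div_cos, lt_div_iff₀ hcos] at ht
        rw [show a * (Real.pi * Real.cos (Real.pi * a) / Real.sin (Real.pi * a))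
            = a * (Real.pi * Real.cos (Real.pi * a)) / Real.sin (Real.pi * a) by ring,
          div_le_one hs]
        nlinarith
      · subst h; norm_num
    calc a * (digamma (c - a) - digamma a) ≤ a * (digamma (1 - a) - digamma a) := by nlinarith
      _ ≤ 1 := key
  have hmemIoc : Set.Ioc (0:ℝ) (c/2) ∈ nhdsWithin (0:ℝ) (Set.Ioi 0) :=
    Ioc_mem_nhdsGT_of_mem ⟨le_refl 0, half_pos hc0⟩
  have hmemIoc1 : Set.Ioc (0:ℝ) 1 ∈ nhdsWithin (0:ℝ) (Set.Ioi 0) :=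
    Ioc_mem_nhdsGT_of_mem ⟨le_refl 0, one_pos⟩
  have hlin : ∀ K : ℝ, Filter.Tendsto (fun a : ℝ => a * K) (nhdsWithin 0 (Set.Ioi 0)) (nhds 0) :=
    fun K => ((continuous_id.mul continuous_const).tendsto' 0 0 (by simp)).mono_left
      nhdsWithin_le_nhds
  have t1 : Filter.Tendsto (fun a : ℝ => a * digamma (c - a)) (nhdsWithin 0 (Set.Ioi 0))
      (nhds 0) := by
    refine tendsto_of_tendsto_of_tendsto_of_le_of_le' (hlin (digamma (c/2)))
      (hlin (digamma c)) ?_ ?_ <;> filter_upwards [hmemIoc] with a ha <;>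
      rcases ha with ⟨ha0, ha2⟩
    · exact mul_le_mul_of_nonneg_left (digamma_mono (Set.mem_Ioi.mpr (half_pos hc0))
        (Set.mem_Ioi.mpr (by linarith)) (by linarith)) ha0.le
    · exact mul_le_mul_of_nonneg_left (digamma_mono (Set.mem_Ioi.mpr (by linarith))
        (Set.mem_Ioi.mpr hc0) (by linarith)) ha0.le
  have t2 : Filter.Tendsto (fun a : ℝ => a * digamma (a + 1)) (nhdsWithin 0 (Set.Ioi 0))
      (nhds 0) := by
    refine tendsto_of_tendsto_of_tendsto_of_le_of_le' (hlin (digamma 1))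
      (hlin (digamma 2)) ?_ ?_ <;> filter_upwards [hmemIoc1] with a ha <;>
      rcases ha with ⟨ha0, ha2⟩
    · exact mul_le_mul_of_nonneg_left (digamma_mono (Set.mem_Ioi.mpr one_pos)
        (Set.mem_Ioi.mpr (by linarith)) (by linarith)) ha0.le
    · exact mul_le_mul_of_nonneg_left (digamma_mono (Set.mem_Ioi.mpr (by linarith))
        (Set.mem_Ioi.mpr two_pos) (by linarith)) ha0.le
  have tmain : Filter.Tendsto (fun a : ℝ => a * (digamma (c - a) - digamma a))
      (nhdsWithin 0 (Set.Ioi 0)) (nhds 1) := by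
    have base : Filter.Tendsto
        (fun a : ℝ => a * digamma (c - a) - a * digamma (a + 1) + 1)
        (nhdsWithin 0 (Set.Ioi 0)) (nhds 1) := by
      simpa using (t1.sub t2).add_const 1
    refine base.congr' ?_
    filter_upwards [self_mem_nhdsWithin] with a (ha : (0:ℝ) < a)
    rw [digamma_add_one ha]
    field_simp
    ring
  refine ⟨hub, tmain, ?_, ?_⟩
  · rintro y ⟨a, ha, rfl⟩
    exact hub a ha
  · intro b hb
    refine le_of_tendsto tmain ?_
    filter_upwards [hmemIoc] with a ha
    exact hb ⟨a, ha, rfl⟩
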